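/- arXiv:1901.11517 — 3 statements merged into one kernel-verified Lean document; each statement's English description precedes it below -/
import Mathlib

section
/- A matrix F ∈ ℝ^{2×2} satisfies det F = 1 and |Fe₁| = 1 if and only if there exist R ∈ SO(2) and γ ∈ ℝ such that F = R(I + γ e₁⊗e₂). Moreover, for such F one has |F|² − 2 det F = γ², where |F| denotes the Frobenius norm; in particular γ² = |Fe₂|² − 1. -/
open MeasureTheory Set Filter Topology
open scoped ENNReal

noncomputable section

/-- We identify `ℝ²` with maps `Fin 2 → ℝ`; `x 0` is the `x₁` coordinate and
`x 1` the `x₂` coordinate. -/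
abbrev V2 := Fin 2 → ℝ

/-- `2 × 2` real matrices. -/
abbrev Mat2 := Matrix (Fin 2) (Fin 2) ℝ

/-- Proper rotations: `SO(2) = {R : R Rᵀ = 1, det R = 1}`. -/
def SO2 : Set Mat2 := {R | R * R.transpose = 1 ∧ R.det = 1}

def e1 : V2 := ![1, 0]
def e2 : V2 := ![0, 1]

/-- Euclidean norm on `ℝ²`. -/
def vnorm (v : V2) : ℝ := Real.sqrt (v 0 ^ 2 + v 1 ^ 2)

/-- Frobenius norm on `2 × 2` matrices. -/
def mnorm (M : Mat2) : ℝ := Real.sqrt (∑ i, ∑ j, M i j ^ 2)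

/-- Euclidean inner product on `ℝ²`. -/
def dot (v w : V2) : ℝ := ∑ i, v i * w i

/-- Tensor (outer) product `a ⊗ b = a bᵀ` of two vectors. -/
def outer (a b : V2) : Mat2 := Matrix.of fun i j => a i * b j

/-- Identification of `ℝ²` with the Euclidean space `EuclideanSpace ℝ (Fin 2)`. -/
def vToE (v : V2) : EuclideanSpace ℝ (Fin 2) := (EuclideanSpace.equiv (Fin 2) ℝ).symm v

/-- Identification of `2×2` matrices with `EuclideanSpace ℝ (Fin 2 × Fin 2)`
(so that the induced norm is the Frobenius norm). -/
def mToE (M : Mat2) : EuclideanSpace ℝ (Fin 2 × Fin 2) :=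
  (EuclideanSpace.equiv (Fin 2 × Fin 2) ℝ).symm fun p => M p.1 p.2

/-- A vector-valued function of one real variable has bounded variation on `s`
(with respect to the Euclidean norm). -/
def BVv (ψ : ℝ → V2) (s : Set ℝ) : Prop := BoundedVariationOn (fun t => vToE (ψ t)) s

/-- A matrix-valued function of one real variable has bounded variation on `s`
(with respect to the Frobenius norm). -/
def BVm (R : ℝ → Mat2) (s : Set ℝ) : Prop := BoundedVariationOn (fun t => mToE (R t)) s

/-- Componentwise (a.e. pointwise) derivative of a vector-valued function of one variable.
For a one-dimensional `BV` function, the classical derivative exists a.e. and coincides with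
the density of the absolutely continuous part of its distributional derivative
(the approximate derivative). -/
def vecDeriv (ψ : ℝ → V2) (t : ℝ) : V2 := fun i => deriv (fun s => ψ s i) t

/-- Componentwise derivative of a matrix-valued function of one variable. -/
def mDeriv (R : ℝ → Mat2) (t : ℝ) : Mat2 := Matrix.of fun i j => deriv (fun s => R s i j) t

/-- The rigid layers `ε Y_rig = {x : Int.fract (x₂/ε) ∈ [λ, 1)}` (1-periodic extension of
`[0,1) × [λ,1)`, scaled by `ε`). -/
def rigid2 (lam ε : ℝ) : Set V2 := {x | lam ≤ Int.fract (x 1 / ε)}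

/-- The one-dimensional rigid layers `ε I_rig`, where `I_rig` is the 1-periodic extension
of `[λ, 1)`. -/
def rigid1 (lam ε : ℝ) : Set ℝ := {t | lam ≤ Int.fract (t / ε)}

/-- `a_Ω = inf_{x ∈ Ω} x₂`. -/
def aOm (Ω : Set V2) : ℝ := sInf ((fun x : V2 => x 1) '' Ω)

/-- `b_Ω = sup_{x ∈ Ω} x₂`. -/
def bOm (Ω : Set V2) : ℝ := sSup ((fun x : V2 => x 1) '' Ω)

/-- `Ω` is `x₁`-connected: every horizontal slice is a (possibly empty) interval. -/
def X1Connected (Ω : Set V2) : Prop := ∀ t : ℝ, OrdConnected {s : ℝ | ![s, t] ∈ Ω}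

/-- A (nonempty) bounded Lipschitz domain: near every boundary point, after a rotation,
`Ω` is the region above the graph of a Lipschitz function. -/
def IsLipschitzDomain (Ω : Set V2) : Prop :=
  IsOpen Ω ∧ Ω.Nonempty ∧ Bornology.IsBounded Ω ∧
    ∀ x ∈ frontier Ω, ∃ Q ∈ SO2, ∃ L : NNReal, ∃ f : ℝ → ℝ, ∃ r : ℝ, 0 < r ∧
      LipschitzWith L f ∧ ∀ y ∈ Metric.ball x r, (y ∈ Ω ↔ f (Q.mulVec y 0) < Q.mulVec y 1)

/-- Partial derivative `∂_j φ` of a scalar test function. -/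
def pd (j : Fin 2) (φ : V2 → ℝ) (x : V2) : ℝ := fderiv ℝ φ x (Pi.single j 1)

/-- Componentwise integrability of a matrix-valued map. -/
def IntegrableOnM (g : V2 → Mat2) (Ω : Set V2) : Prop :=
  ∀ i j, IntegrableOn (fun x => g x i j) Ω volume

/-- `u ∈ W^{1,1}(Ω;ℝ²)` with weak gradient `gu`, expressed through integration by parts
against smooth compactly supported test functions. -/
structure IsSobolev11On (Ω : Set V2) (u : V2 → V2) (gu : V2 → Mat2) : Prop where
  int_u : IntegrableOn u Ω volume
  int_gu : IntegrableOnM gu Ω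
  ibp : ∀ φ : V2 → ℝ, ContDiff ℝ (⊤ : ℕ∞) φ → HasCompactSupport φ → tsupport φ ⊆ Ω →
    ∀ i j, ∫ x in Ω, u x i * pd j φ x = - ∫ x in Ω, φ x * gu x i j

/-- `u ∈ BV(Ω;ℝ²)`, with distributional derivative `Du = gu · L² + gs · σ`.
Here `gu` is the approximate differential (density of the absolutely continuous part),
`σ = |D^s u|` is the total variation measure of the singular part (a finite measure,
concentrated on `Ω` and singular with respect to Lebesgue measure), and `gs` is the
polar density of the singular part, of unit Frobenius norm `σ`-a.e. -/
structure HasBVDerivOn (Ω : Set V2) (u : V2 → V2) (gu : V2 → Mat2)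
    (σ : Measure V2) (gs : V2 → Mat2) : Prop where
  int_u : IntegrableOn u Ω volume
  int_gu : IntegrableOnM gu Ω
  fin : σ Set.univ ≠ ⊤
  conc : σ Ωᶜ = 0
  perp : σ ⟂ₘ (volume : Measure V2)
  meas_gs : ∀ i j, AEMeasurable (fun x => gs x i j) σ
  unit : ∀ᵐ x ∂σ, mnorm (gs x) = 1
  ibp : ∀ φ : V2 → ℝ, ContDiff ℝ (⊤ : ℕ∞) φ → HasCompactSupport φ → tsupport φ ⊆ Ω →
    ∀ i j, ∫ x in Ω, u x i * pd j φ x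
        = (- ∫ x in Ω, φ x * gu x i j) - ∫ x, φ x * gs x i j ∂σ

/-- `L¹(Ω;ℝ²)` convergence of a sequence. -/
def L1ConvOn (Ω : Set V2) (un : ℕ → V2 → V2) (u : V2 → V2) : Prop :=
  Tendsto (fun n => ∫ x in Ω, vnorm (un n x - u x)) atTop (𝓝 0)

/-- Weak* convergence of the measures `gn n · L²∟Ω` to `gu · L²∟Ω + gs · σ`
in `M(Ω; ℝ^{2×2})`, tested against continuous functions compactly supported in `Ω`. -/
def MeasConv (Ω : Set V2) (gn : ℕ → V2 → Mat2) (gu : V2 → Mat2)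
    (σ : Measure V2) (gs : V2 → Mat2) : Prop :=
  ∀ φ : V2 → ℝ, Continuous φ → HasCompactSupport φ → tsupport φ ⊆ Ω → ∀ i j,
    Tendsto (fun n => ∫ x in Ω, φ x * gn n x i j) atTop
      (𝓝 ((∫ x in Ω, φ x * gu x i j) + ∫ x, φ x * gs x i j ∂σ))

/-- Weak* convergence in `BV(Ω;ℝ²)` of a sequence of `W^{1,1}` maps to a `BV` limit:
`L¹` convergence together with weak* convergence of the derivative measures. -/
def WeakStarToBV (Ω : Set V2) (un : ℕ → V2 → V2) (u : V2 → V2) : Prop :=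
  ∃ gu σ gs, HasBVDerivOn Ω u gu σ gs ∧ L1ConvOn Ω un u ∧
    ∀ gn : ℕ → V2 → Mat2, (∀ n, IsSobolev11On Ω (un n) (gn n)) → MeasConv Ω gn gu σ gs

/-- `u ∈ A_ε`, witnessed by the data `R ∈ L^∞(Ω;SO(2))` and `γ ∈ L¹(Ω)`:
`u ∈ W^{1,1}(Ω;ℝ²)` with `∇u = R (I + γ e₁⊗e₂)` a.e. and `γ = 0` a.e. on `εY_rig ∩ Ω`. -/
structure MemAeps (Ω : Set V2) (lam ε : ℝ) (u : V2 → V2)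
    (R : V2 → Mat2) (γ : V2 → ℝ) : Prop where
  so2 : ∀ᵐ x ∂(volume.restrict Ω), R x ∈ SO2
  int_γ : IntegrableOn γ Ω volume
  sob : IsSobolev11On Ω u fun x => R x * (1 + γ x • outer e1 e2)
  rig : ∀ᵐ x ∂(volume.restrict (Ω ∩ rigid2 lam ε)), γ x = 0

/-- The elastoplastic energy `E_ε(u) = ∫_Ω |γ| dx` for `u ∈ A_ε`, `∞` otherwise,
as an `ℝ≥0∞`-valued functional (the decomposition data is essentially unique). -/
def Eeps (Ω : Set V2) (lam ε : ℝ) (u : V2 → V2) : ℝ≥0∞ :=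
  sInf {c | ∃ R γ, MemAeps Ω lam ε u R γ ∧ c = ∫⁻ x in Ω, ENNReal.ofReal |γ x|}

/-- `u ∈ A` relative to the vertical interval `(a, b)`:
`u ∈ BV(Ω;ℝ²)` with `u(x) = R(x₂)x + ψ(x₂)` a.e., `R ∈ BV(a,b;SO(2))`,
`ψ ∈ BV(a,b;ℝ²)` and `det ∇u = 1` a.e. in `Ω`. -/
def memAOn (Ω : Set V2) (a b : ℝ) (u : V2 → V2) : Prop :=
  ∃ gu σ gs, HasBVDerivOn Ω u gu σ gs ∧
    (∃ R : ℝ → Mat2, ∃ ψ : ℝ → V2, (∀ t ∈ Ioo a b, R t ∈ SO2) ∧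
      BVm R (Ioo a b) ∧ BVv ψ (Ioo a b) ∧
      ∀ᵐ x ∂(volume.restrict Ω), u x = (R (x 1)).mulVec x + ψ (x 1)) ∧
    ∀ᵐ x ∂(volume.restrict Ω), (gu x).det = 1

/-- `u ∈ A`. -/
def memA (Ω : Set V2) (u : V2 → V2) : Prop := memAOn Ω (aOm Ω) (bOm Ω) u

/-- `u ∈ A∥` relative to the vertical interval `(a,b)`:
`u(x) = Rx + ϑ(x₂) R e₁ + c` a.e. with a constant rotation `R ∈ SO(2)`,
`ϑ ∈ BV(a,b)` and `c ∈ ℝ²`. -/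
def memAparOn (Ω : Set V2) (a b : ℝ) (u : V2 → V2) : Prop :=
  ∃ R ∈ SO2, ∃ ϑ : ℝ → ℝ, ∃ c : V2, BoundedVariationOn ϑ (Ioo a b) ∧
    ∀ᵐ x ∂(volume.restrict Ω), u x = R.mulVec x + ϑ (x 1) • R.mulVec e1 + c

/-- `u ∈ A∥`. -/
def memApar (Ω : Set V2) (u : V2 → V2) : Prop := memAparOn Ω (aOm Ω) (bOm Ω) u

/-- The limit energy `E(u) = ∫_Ω |ψ'·Re₁| dx + |D^s u|(Ω)` for `u ∈ A`, `∞` otherwise. -/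
def Efun (Ω : Set V2) (u : V2 → V2) : ℝ≥0∞ :=
  sInf {c | ∃ gu σ gs, HasBVDerivOn Ω u gu σ gs ∧
    ∃ R : ℝ → Mat2, ∃ ψ : ℝ → V2,
      (∀ t ∈ Ioo (aOm Ω) (bOm Ω), R t ∈ SO2) ∧ BVm R (Ioo (aOm Ω) (bOm Ω)) ∧
      BVv ψ (Ioo (aOm Ω) (bOm Ω)) ∧
      (∀ᵐ x ∂(volume.restrict Ω), u x = (R (x 1)).mulVec x + ψ (x 1)) ∧
      (∀ᵐ x ∂(volume.restrict Ω), (gu x).det = 1) ∧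
      c = (∫⁻ x in Ω, ENNReal.ofReal |dot (vecDeriv ψ (x 1)) ((R (x 1)).mulVec e1)|)
          + σ Set.univ}

/-- The limit energy on `A∥`: `E(u) = ∫_Ω |ϑ'(x₂)| dx + |D^s u|(Ω)` for `u ∈ A∥`,
`∞` otherwise. -/
def EparFun (Ω : Set V2) (u : V2 → V2) : ℝ≥0∞ :=
  sInf {c | ∃ gu σ gs, HasBVDerivOn Ω u gu σ gs ∧
    ∃ R ∈ SO2, ∃ ϑ : ℝ → ℝ, ∃ c0 : V2, BoundedVariationOn ϑ (Ioo (aOm Ω) (bOm Ω)) ∧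
      (∀ᵐ x ∂(volume.restrict Ω), u x = R.mulVec x + ϑ (x 1) • R.mulVec e1 + c0) ∧
      c = (∫⁻ x in Ω, ENNReal.ofReal |deriv ϑ (x 1)|) + σ Set.univ}

/-- The regularized limit energy `E^δ(u) = ∫_Ω |ϑ'| dx + |D^s u|(Ω) + δ|Ω|` on `A∥`,
`∞` otherwise. -/
def EDelta (Ω : Set V2) (δ : ℝ) (u : V2 → V2) : ℝ≥0∞ :=
  EparFun Ω u + ENNReal.ofReal δ * volume Ω

/-- `‖v‖_{W^{1,p}(Ω;ℝ²)}^p = ∫_Ω |v|^p + ∫_Ω |Dv|^p` for a map `v` with weak Jacobian `G`. -/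
def Wp1 (p : ℝ) (Ω : Set V2) (v : V2 → V2) (G : V2 → Mat2) : ℝ≥0∞ :=
  (∫⁻ x in Ω, ENNReal.ofReal (vnorm (v x) ^ p)) + ∫⁻ x in Ω, ENNReal.ofReal (mnorm (G x) ^ p)

/-- The regularized energy
`E^δ_ε(u) = ∫_Ω |γ| dx + δ ‖∂₁ u‖_{W^{1,p}(Ω;ℝ²)}^p` for `u ∈ A_ε` with
`∂₁u = R e₁ ∈ W^{1,p}(Ω;ℝ²)`, and `∞` otherwise. -/
def EepsDelta (Ω : Set V2) (lam ε δ p : ℝ) (u : V2 → V2) : ℝ≥0∞ :=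
  sInf {c | ∃ R γ, MemAeps Ω lam ε u R γ ∧
    ∃ G : V2 → Mat2, IsSobolev11On Ω (fun x => (R x).mulVec e1) G ∧
      c = (∫⁻ x in Ω, ENNReal.ofReal |γ x|) +
          ENNReal.ofReal δ * Wp1 p Ω (fun x => (R x).mulVec e1) G}

/-- `x` is an approximate jump point of `u`, with one-sided approximate limits `a ≠ b`
relative to a unit normal `ν`. -/
def JumpPt (u : V2 → V2) (x : V2) : Prop :=
  ∃ a b ν : V2, a ≠ b ∧ vnorm ν = 1 ∧
    Tendsto (fun r : ℝ =>
        (∫⁻ z in {z | z ∈ Metric.ball x r ∧ 0 < dot (z - x) ν},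
            ENNReal.ofReal (vnorm (u z - a))) / volume (Metric.ball x r))
      (𝓝[>] 0) (𝓝 0) ∧
    Tendsto (fun r : ℝ =>
        (∫⁻ z in {z | z ∈ Metric.ball x r ∧ dot (z - x) ν < 0},
            ENNReal.ofReal (vnorm (u z - b))) / volume (Metric.ball x r))
      (𝓝[>] 0) (𝓝 0)

/-- The jump set `J_u` of `u` in `Ω`. -/
def jumpSet (Ω : Set V2) (u : V2 → V2) : Set V2 := {x ∈ Ω | JumpPt u x}

/-- `u ∈ SBV_∞(Ω;ℝ²)`: `u ∈ BV` with singular part concentrated on the jump set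
(no Cantor part), `∇u ∈ L^∞(Ω;ℝ^{2×2})` and `H¹(J_u) < ∞`. -/
def memSBVinf (Ω : Set V2) (u : V2 → V2) : Prop :=
  ∃ gu σ gs, HasBVDerivOn Ω u gu σ gs ∧
    σ {x | ¬ JumpPt u x} = 0 ∧
    (∃ M : ℝ, ∀ᵐ x ∂(volume.restrict Ω), mnorm (gu x) ≤ M) ∧
    Measure.hausdorffMeasure (1 : ℝ) (jumpSet Ω u) ≠ ⊤

/-- Piecewise constant functions on `(a,b)` with finitely many jumps
(the class `PC(a,b)`). -/
def PCOn {α : Type*} (a b : ℝ) (f : ℝ → α) : Prop :=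
  ∃ S : Finset ℝ, ∀ s₁ ∈ Ioo a b, ∀ s₂ ∈ Ioo a b, s₁ ≤ s₂ →
    (∀ r ∈ S, r ∉ Icc s₁ s₂) → f s₁ = f s₂

/-- Piecewise Lipschitz functions on `(a,b)` with finitely many jump points:
the class `SBV_∞(a,b;ℝ²)` of one-dimensional special functions of bounded variation
with bounded derivative and finitely many jumps. -/
def PLipOn (a b : ℝ) (f : ℝ → V2) : Prop :=
  ∃ S : Finset ℝ, ∃ L : ℝ, 0 ≤ L ∧ ∀ s₁ ∈ Ioo a b, ∀ s₂ ∈ Ioo a b, s₁ ≤ s₂ →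
    (∀ r ∈ S, r ∉ Icc s₁ s₂) → vnorm (f s₂ - f s₁) ≤ L * (s₂ - s₁)

/-- The rectangle `Ω = (0,1) × (−1,1)`. -/
def Rect : Set V2 := {x | x 0 ∈ Ioo (0:ℝ) 1 ∧ x 1 ∈ Ioo (-1:ℝ) 1}

/-- `f ∈ W^{1,1}(a,b)`: `f` has an integrable weak derivative on `(a,b)`
(absolutely continuous representative). -/
def IsW11On (f : ℝ → ℝ) (a b : ℝ) : Prop :=
  ∃ g : ℝ → ℝ, IntegrableOn g (Ioo a b) volume ∧
    ∀ s ∈ Ioo a b, ∀ t ∈ Ioo a b, f t - f s = ∫ r in s..t, g r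

lemma so2_cols {R : Mat2} (h : R ∈ SO2) :
    R 0 0 ^ 2 + R 1 0 ^ 2 = 1 ∧ R 0 1 ^ 2 + R 1 1 ^ 2 = 1 ∧
    R 0 0 * R 0 1 + R 1 0 * R 1 1 = 0 := by
  have h1 : R.transpose * R = 1 := mul_eq_one_comm.mp h.1
  have e00 := congrFun (congrFun h1 0) 0
  have e11 := congrFun (congrFun h1 1) 1
  have e01 := congrFun (congrFun h1 0) 1
  simp [Matrix.mul_apply, Fin.sum_univ_two, Matrix.one_apply,
    Matrix.transpose_apply] at e00 e11 e01
  exact ⟨by nlinarith [e00], by nlinarith [e11], by nlinarith [e01]⟩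

lemma shear_entries (R : Mat2) (γ : ℝ) :
    R * (1 + γ • outer e1 e2) =
      Matrix.of ![![R 0 0, R 0 0 * γ + R 0 1], ![R 1 0, R 1 0 * γ + R 1 1]] := by
  ext i j
  fin_cases i <;> fin_cases j <;>
    simp [Matrix.mul_apply, Fin.sum_univ_two, Matrix.one_apply, outer, e1, e2]

/-- structure of the set `M_{e₁}`: a matrix `F ∈ ℝ^{2×2}` satisfies
`det F = 1` and `|F e₁| = 1` iff `F = R(I + γ e₁⊗e₂)` with `R ∈ SO(2)`, `γ ∈ ℝ`; moreover,
for such `F` one has `|F|² − 2 det F = γ²` (Frobenius norm) and `γ² = |F e₂|² − 1`. -/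
theorem Me1_characterization :
    (∀ F : Mat2, (F.det = 1 ∧ vnorm (F.mulVec e1) = 1) ↔
      ∃ R ∈ SO2, ∃ γ : ℝ, F = R * (1 + γ • outer e1 e2)) ∧
    (∀ F : Mat2, ∀ R ∈ SO2, ∀ γ : ℝ, F = R * (1 + γ • outer e1 e2) →
      mnorm F ^ 2 - 2 * F.det = γ ^ 2 ∧ γ ^ 2 = vnorm (F.mulVec e2) ^ 2 - 1) := by
  constructor
  · intro F
    constructor
    · rintro ⟨hdet, hnorm⟩
      rw [Matrix.det_fin_two] at hdet
      have hcol : F 0 0 ^ 2 + F 1 0 ^ 2 = 1 := by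
        have h0 : F.mulVec e1 0 = F 0 0 := by
          simp [Matrix.mulVec, dotProduct, Fin.sum_univ_two, e1]
        have h1 : F.mulVec e1 1 = F 1 0 := by
          simp [Matrix.mulVec, dotProduct, Fin.sum_univ_two, e1]
        have hn : Real.sqrt (F 0 0 ^ 2 + F 1 0 ^ 2) = 1 := by
          rw [← h0, ← h1]; exact hnorm
        have := congrArg (· ^ 2) hn
        simpa [Real.sq_sqrt (by positivity : (0:ℝ) ≤ F 0 0 ^ 2 + F 1 0 ^ 2)] using this
      refine ⟨Matrix.of ![![F 0 0, -(F 1 0)], ![F 1 0, F 0 0]], ⟨?_, ?_⟩,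
        F 0 0 * F 0 1 + F 1 0 * F 1 1, ?_⟩
      · ext i j
        fin_cases i <;> fin_cases j <;>
          simp [Matrix.mul_apply, Fin.sum_univ_two, Matrix.one_apply,
            Matrix.transpose_apply, Matrix.vecHead, Matrix.vecTail] <;>
          nlinarith [hcol]
      · rw [Matrix.det_fin_two]; simp; nlinarith [hcol]
      · rw [shear_entries]
        ext i j
        fin_cases i <;> fin_cases j <;> simp
        · linear_combination (-(F 0 1)) * hcol + (-(F 1 0)) * hdet
        · linear_combination (-(F 1 1)) * hcol + (F 0 0) * hdet
    · rintro ⟨R, hR, γ, rfl⟩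
      obtain ⟨hc1, hc2, hc3⟩ := so2_cols hR
      have hdR : R 0 0 * R 1 1 - R 0 1 * R 1 0 = 1 := by
        have hd := hR.2; rwa [Matrix.det_fin_two] at hd
      rw [shear_entries R γ]
      constructor
      · rw [Matrix.det_fin_two]; simp; linear_combination hdR
      · have h0 : (Matrix.of ![![R 0 0, R 0 0 * γ + R 0 1],
            ![R 1 0, R 1 0 * γ + R 1 1]]).mulVec e1 0 = R 0 0 := by
          simp [Matrix.mulVec, dotProduct, Fin.sum_univ_two, e1]
        have h1 : (Matrix.of ![![R 0 0, R 0 0 * γ + R 0 1],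
            ![R 1 0, R 1 0 * γ + R 1 1]]).mulVec e1 1 = R 1 0 := by
          simp [Matrix.mulVec, dotProduct, Fin.sum_univ_two, e1]
        rw [vnorm, h0, h1, hc1, Real.sqrt_one]
  · rintro F R hR γ rfl
    obtain ⟨hc1, hc2, hc3⟩ := so2_cols hR
    have hdR : R 0 0 * R 1 1 - R 0 1 * R 1 0 = 1 := by
      have hd := hR.2; rwa [Matrix.det_fin_two] at hd
    rw [shear_entries R γ]
    constructor
    · rw [mnorm, Matrix.det_fin_two]
      have hs : (∑ i, ∑ j, (Matrix.of ![![R 0 0, R 0 0 * γ + R 0 1],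
          ![R 1 0, R 1 0 * γ + R 1 1]]) i j ^ 2) = γ ^ 2 + 2 := by
        simp [Fin.sum_univ_two]
        linear_combination (1 + γ ^ 2) * hc1 + hc2 + 2 * γ * hc3
      rw [hs, Real.sq_sqrt (by positivity)]
      simp; linear_combination (-2) * hdR
    · have h0 : (Matrix.of ![![R 0 0, R 0 0 * γ + R 0 1],
          ![R 1 0, R 1 0 * γ + R 1 1]]).mulVec e2 0 = R 0 0 * γ + R 0 1 := by
        simp [Matrix.mulVec, dotProduct, Fin.sum_univ_two, e2]
      have h1 : (Matrix.of ![![R 0 0, R 0 0 * γ + R 0 1],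
          ![R 1 0, R 1 0 * γ + R 1 1]]).mulVec e2 1 = R 1 0 * γ + R 1 1 := by
        simp [Matrix.mulVec, dotProduct, Fin.sum_univ_two, e2]
      rw [vnorm, h0, h1]
      have hsum : (R 0 0 * γ + R 0 1) ^ 2 + (R 1 0 * γ + R 1 1) ^ 2 = γ ^ 2 + 1 := by
        linear_combination γ ^ 2 * hc1 + hc2 + 2 * γ * hc3
      rw [hsum, Real.sq_sqrt (by positivity)]; ring
end
end

section
/- Let c ∈ (−1,1), α ∈ ℝ and β ≥ 1. Then ∫₀¹ √((x+α)² + (β−x)² + 2c(x+α)(β−x)) dx < |α| + β. -/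
open MeasureTheory Set Filter Topology
open scoped ENNReal

noncomputable section

lemma integral_estimate_lt_aux (c α β x : ℝ) (hc1 : -1 < c) (hc2 : c < 1) (hβ : 1 ≤ β)
    (hx : x ∈ Ioo (0:ℝ) 1) (hne : x + α ≠ 0) :
    Real.sqrt ((x + α) ^ 2 + (β - x) ^ 2 + 2 * c * (x + α) * (β - x)) < |α| + β := by
  obtain ⟨hx0, hx1⟩ := hx
  have hb : 0 < β - x := by linarith
  have hA : 0 < |x + α| := abs_pos.mpr hne
  have hK : 0 ≤ |α| := abs_nonneg α
  have hpos : 0 < |α| + β := by linarith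
  rw [Real.sqrt_lt' hpos]
  have h1 : c * (x + α) < |x + α| := by
    calc c * (x + α) ≤ |c * (x + α)| := le_abs_self _
      _ = |c| * |x + α| := abs_mul _ _
      _ < 1 * |x + α| := by
          exact mul_lt_mul_of_pos_right (abs_lt.mpr ⟨hc1, hc2⟩) hA
      _ = |x + α| := one_mul _
  have h2 : |x + α| ≤ x + |α| := by
    calc |x + α| ≤ |x| + |α| := abs_add_le x α
      _ = x + |α| := by rw [abs_of_pos hx0]
  have hsq : |x + α| ^ 2 = (x + α) ^ 2 := sq_abs _
  have h3 : c * (x + α) * (β - x) < |x + α| * (β - x) :=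
    mul_lt_mul_of_pos_right h1 hb
  nlinarith [sq_nonneg (|x + α| + (β - x)), mul_le_mul_of_nonneg_left h2 hb.le,
    mul_le_mul_of_nonneg_right h2 (by linarith : (0:ℝ) ≤ x + |α| + (|α| + β))]

/-- elementary integral estimate from Remark 5.1(c):
for `c ∈ (−1,1)`, `α ∈ ℝ` and `β ≥ 1`,
`∫₀¹ √((x+α)² + (β−x)² + 2c(x+α)(β−x)) dx < |α| + β`. -/
theorem integral_estimate_lt
    (c : ℝ) (hc : c ∈ Ioo (-1:ℝ) 1) (α β : ℝ) (hβ : 1 ≤ β) :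
    (∫ x in Ioo (0:ℝ) 1,
        Real.sqrt ((x + α) ^ 2 + (β - x) ^ 2 + 2 * c * (x + α) * (β - x))) < |α| + β := by
  obtain ⟨hc1, hc2⟩ := hc
  set f : ℝ → ℝ := fun x =>
    Real.sqrt ((x + α) ^ 2 + (β - x) ^ 2 + 2 * c * (x + α) * (β - x)) with hf
  have hcont : Continuous f := by
    apply Real.continuous_sqrt.comp; continuity
  have hintf : IntegrableOn f (Ioo (0:ℝ) 1) volume :=
    (hcont.integrableOn_Icc).mono_set Ioo_subset_Icc_self
  have hvol : (volume (Ioo (0:ℝ) 1)) = 1 := by simp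
  set g : ℝ → ℝ := fun x => (|α| + β) - f x with hg
  have hintg : IntegrableOn g (Ioo (0:ℝ) 1) volume :=
    (integrableOn_const (by simp)).sub hintf
  have hae : ∀ᵐ x ∂(volume.restrict (Ioo (0:ℝ) 1)), 0 < g x := by
    have hne : ∀ᵐ x : ℝ ∂volume, x ≠ -α := by
      refine ae_iff.mpr ?_
      simpa using measure_singleton (-α)
    filter_upwards [ae_restrict_mem measurableSet_Ioo, ae_restrict_of_ae hne] with x hx hxne
    have : x + α ≠ 0 := fun h => hxne (by linarith)
    have := integral_estimate_lt_aux c α β x hc1 hc2 hβ hx this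
    simp only [hg, hf]
    linarith
  have hkey : 0 < ∫ x in Ioo (0:ℝ) 1, g x := by
    rcases lt_or_ge 0 (∫ x in Ioo (0:ℝ) 1, g x) with h | h
    · exact h
    · exfalso
      have hnonneg : 0 ≤ ∫ x in Ioo (0:ℝ) 1, g x :=
        integral_nonneg_of_ae (hae.mono fun x hx => hx.le)
      have heq : (∫ x in Ioo (0:ℝ) 1, g x) = 0 := le_antisymm h hnonneg
      have hzero : g =ᵐ[volume.restrict (Ioo (0:ℝ) 1)] 0 :=
        (integral_eq_zero_iff_of_nonneg_ae (hae.mono fun x hx => hx.le) hintg).mp heq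
      have hfalse : ∀ᵐ x ∂(volume.restrict (Ioo (0:ℝ) 1)), False := by
        filter_upwards [hae, hzero] with x h1 h2
        exact absurd h2 (ne_of_gt h1)
      have := ae_iff.mp hfalse
      simp only [not_false_iff, setOf_true] at this
      rw [Measure.restrict_apply_univ, hvol] at this
      exact one_ne_zero this
  have hsub : (∫ x in Ioo (0:ℝ) 1, g x)
      = (∫ x in Ioo (0:ℝ) 1, (|α| + β)) - ∫ x in Ioo (0:ℝ) 1, f x :=
    integral_sub (integrableOn_const (by simp)) hintf
  have hconst : (∫ x in Ioo (0:ℝ) 1, (|α| + β)) = |α| + β := by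
    rw [setIntegral_const, measureReal_def, hvol]; simp
  rw [hsub, hconst] at hkey
  linarith
end
end

section
/- For every a ∈ ℝ² with a ≠ 0, the minimum over b ∈ ℝ² of ∫₀¹ |ta + b| dt equals |a|/4, where |·| denotes the Euclidean norm on ℝ². -/
open MeasureTheory Set Filter Topology
open scoped ENNReal

noncomputable section

lemma intInt_abs (c a b : ℝ) : IntervalIntegrable (fun t => |t + c|) volume a b :=
  Continuous.intervalIntegrable (by continuity) a b

lemma intInt_abs2 (c a b : ℝ) : IntervalIntegrable (fun t : ℝ => |t + 1/2 + c|) volume a b :=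
  Continuous.intervalIntegrable (by continuity) a b

lemma key_lb (c : ℝ) : (1:ℝ)/4 ≤ ∫ t in (0:ℝ)..1, |t + c| := by
  have hsplit : ∫ t in (0:ℝ)..1, |t + c|
      = (∫ t in (0:ℝ)..(1/2), |t + c|) + ∫ t in (1/2:ℝ)..1, |t + c| :=
    (intervalIntegral.integral_add_adjacent_intervals (intInt_abs c 0 (1/2))
      (intInt_abs c (1/2) 1)).symm
  have hshift : ∫ t in (1/2:ℝ)..1, |t + c|
      = ∫ t in (0:ℝ)..(1/2), |t + 1/2 + c| := by
    have := intervalIntegral.integral_comp_add_right (a := (0:ℝ)) (b := 1/2)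
      (fun x => |x + c|) (1/2)
    rw [this]
    norm_num
  have hsum : (∫ t in (0:ℝ)..(1/2), |t + c|) + ∫ t in (0:ℝ)..(1/2), |t + 1/2 + c|
      = ∫ t in (0:ℝ)..(1/2), (|t + c| + |t + 1/2 + c|) :=
    (intervalIntegral.integral_add (intInt_abs c 0 (1/2)) (intInt_abs2 c 0 (1/2))).symm
  have hmono : ∫ t in (0:ℝ)..(1/2), (1/2:ℝ)
      ≤ ∫ t in (0:ℝ)..(1/2), (|t + c| + |t + 1/2 + c|) := by
    apply intervalIntegral.integral_mono_on (by norm_num)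
      intervalIntegrable_const ((intInt_abs c 0 (1/2)).add (intInt_abs2 c 0 (1/2)))
    intro t _
    have h := abs_sub (t + 1/2 + c) (t + c)
    have he : (t + 1/2 + c) - (t + c) = 1/2 := by ring
    rw [he] at h
    have : |(1/2 : ℝ)| = 1/2 := by norm_num
    linarith
  rw [hsplit, hshift, hsum]
  calc (1:ℝ)/4 = ∫ t in (0:ℝ)..(1/2), (1/2:ℝ) := by simp; norm_num
    _ ≤ _ := hmono

lemma key_eq : ∫ t in (0:ℝ)..1, |t - 1/2| = 1/4 := by
  have h1 : ∫ t in (0:ℝ)..(1/2), |t - 1/2| = ∫ t in (0:ℝ)..(1/2), (1/2 - t) := by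
    apply intervalIntegral.integral_congr
    intro t ht
    rw [Set.uIcc_of_le (by norm_num)] at ht
    dsimp only
    rw [abs_of_nonpos (by linarith [ht.2])]; ring
  have h2 : ∫ t in (1/2:ℝ)..1, |t - 1/2| = ∫ t in (1/2:ℝ)..1, (t - 1/2) := by
    apply intervalIntegral.integral_congr
    intro t ht
    rw [Set.uIcc_of_le (by norm_num)] at ht
    dsimp only
    rw [abs_of_nonneg (by linarith [ht.1])]
  have hsplit : ∫ t in (0:ℝ)..1, |t - 1/2|
      = (∫ t in (0:ℝ)..(1/2), |t - 1/2|) + ∫ t in (1/2:ℝ)..1, |t - 1/2| :=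
    (intervalIntegral.integral_add_adjacent_intervals
      (Continuous.intervalIntegrable (by continuity) _ _)
      (Continuous.intervalIntegrable (by continuity) _ _)).symm
  rw [hsplit, h1, h2,
    intervalIntegral.integral_sub intervalIntegrable_const intervalIntegral.intervalIntegrable_id,
    intervalIntegral.integral_sub intervalIntegral.intervalIntegrable_id intervalIntegrable_const]
  simp [integral_id]
  norm_num

/-- optimization over translations:
for every `a ∈ ℝ²`, `a ≠ 0`, the minimum over `b ∈ ℝ²` of `∫₀¹ |t a + b| dt` equals
`|a|/4` (Euclidean norm), and it is attained. -/
theorem min_translation_integral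
    (a : EuclideanSpace ℝ (Fin 2)) (ha : a ≠ 0) :
    IsLeast {r : ℝ | ∃ b : EuclideanSpace ℝ (Fin 2),
        r = ∫ t in Ioo (0:ℝ) 1, ‖t • a + b‖} (‖a‖ / 4) := by
  have hna : (0:ℝ) < ‖a‖ := norm_pos_iff.mpr ha
  constructor
  · refine ⟨-(1/2:ℝ) • a, ?_⟩
    have heq : ∀ t : ℝ, ‖t • a + -(1/2:ℝ) • a‖ = |t - 1/2| * ‖a‖ := by
      intro t
      rw [neg_smul, ← sub_eq_add_neg, ← sub_smul, norm_smul, Real.norm_eq_abs]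
    have : ∫ t in Ioo (0:ℝ) 1, ‖t • a + -(1/2:ℝ) • a‖
        = ∫ t in Ioo (0:ℝ) 1, |t - 1/2| * ‖a‖ :=
      setIntegral_congr_fun measurableSet_Ioo (fun t _ => heq t)
    rw [this, integral_mul_const, ← integral_Ioc_eq_integral_Ioo,
      ← intervalIntegral.integral_of_le (by norm_num : (0:ℝ) ≤ 1), key_eq]
    ring
  · rintro r ⟨b, rfl⟩
    set c : ℝ := (inner ℝ b a : ℝ) / ‖a‖^2 with hc
    have hpt : ∀ t : ℝ, ‖a‖ * |t + c| ≤ ‖t • a + b‖ := by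
      intro t
      have h1 : |(inner ℝ (t • a + b) a : ℝ)| ≤ ‖t • a + b‖ * ‖a‖ := abs_real_inner_le_norm _ _
      have h2 : (inner ℝ (t • a + b) a : ℝ) = t * ‖a‖^2 + inner ℝ b a := by
        rw [inner_add_left, real_inner_smul_left, real_inner_self_eq_norm_sq]
      have h3 : |t * ‖a‖^2 + (inner ℝ b a : ℝ)| = ‖a‖^2 * |t + c| := by
        rw [← abs_of_pos (by positivity : (0:ℝ) < ‖a‖^2), ← abs_mul]
        congr 1
        rw [abs_of_pos (by positivity : (0:ℝ) < ‖a‖^2), hc]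
        field_simp [hc]
      rw [h2, h3] at h1
      nlinarith [h1, hna]
    have hcont : Continuous (fun t : ℝ => ‖t • a + b‖) := by continuity
    have hcont2 : Continuous (fun t : ℝ => ‖a‖ * |t + c|) := by continuity
    have hmono : ∫ t in Ioo (0:ℝ) 1, ‖a‖ * |t + c| ≤ ∫ t in Ioo (0:ℝ) 1, ‖t • a + b‖ :=
      setIntegral_mono_on ((intervalIntegrable_iff_integrableOn_Ioo_of_le (by norm_num)).mp
          (hcont2.intervalIntegrable 0 1))
        ((intervalIntegrable_iff_integrableOn_Ioo_of_le (by norm_num)).mp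
          (hcont.intervalIntegrable 0 1))
        measurableSet_Ioo (fun t _ => hpt t)
    have hval : ∫ t in Ioo (0:ℝ) 1, ‖a‖ * |t + c| = ‖a‖ * ∫ t in (0:ℝ)..1, |t + c| := by
      rw [integral_const_mul, ← integral_Ioc_eq_integral_Ioo,
        ← intervalIntegral.integral_of_le (by norm_num : (0:ℝ) ≤ 1)]
    have hk := key_lb c
    calc ‖a‖ / 4 = ‖a‖ * (1/4) := by ring
      _ ≤ ‖a‖ * ∫ t in (0:ℝ)..1, |t + c| := mul_le_mul_of_nonneg_left hk hna.le
      _ = _ := hval.symm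
      _ ≤ _ := hmono
end
end
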